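/- Let w₁, w₂ be nonzero reals with |w₁| > |w₂|, and let μ be a Borel probability measure on ℝ with ∫ x² dμ(x) < ∞. Let μ_abs denote the pushforward of μ under the absolute value map x ↦ |x|. Then R_s(μ_abs) ≤ R_s(μ). (Lemma 2, second inequality.) -/

import Mathlib

/-!
Folding leaves the term `∫ h(Q(w·x)) dμ` unchanged because `Q(-t) = 1 - Q(t)` and
`h(1 - p) = h(p)`. Hence `R_s(μ_abs) - R_s(μ) = G(w₁) - G(w₂)` with `G(w) = h(q(w)) - h(p(w))`,
where `q(w) = ∫ Q(w·|x|) dμ` and `p(w) = ∫ Q(w·x) dμ`. The same symmetry makes `G` even.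
For `w > 0`, `q ≤ min(p, 1 - p)` and `|p'| ≤ -q'`; as `h'(t) = log (1 - t) - log t` is
decreasing and odd about `1/2`, this gives `|h'(p)| ≤ h'(q)`, so `G' = h'(q) q' - h'(p) p' ≤ 0`.
Thus `G` is antitone on `[0, ∞)` and `G(|w₁|) ≤ G(|w₂|)`.
-/

open MeasureTheory Real Filter

/-- The standard Gaussian tail function `Q(x) = ∫_x^∞ (2π)^{-1/2} e^{-u²/2} du`. -/
noncomputable def gaussQ (x : ℝ) : ℝ :=
  ∫ u in Set.Ioi x, (Real.sqrt (2 * Real.pi))⁻¹ * Real.exp (-u ^ 2 / 2)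

/-- `η(t) = -t log t` (with `η(0) = 0`, automatic since `Real.log 0 = 0`). -/
noncomputable def eta (t : ℝ) : ℝ := -t * Real.log t

/-- The binary entropy function `h(p) = -p log p - (1-p) log (1-p)`. -/
noncomputable def binEnt (p : ℝ) : ℝ := eta p + eta (1 - p)

/-- `I(μ, w) = h(∫ Q(w·x) dμ) - ∫ h(Q(w·x)) dμ`, the mutual information of the real
Gaussian channel `Y = sgn(w·X + N)`, `N ~ N(0,1)`, with a one-bit ADC and input `X ~ μ`. -/
noncomputable def miMeas (μ : Measure ℝ) (w : ℝ) : ℝ :=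
  binEnt (∫ x, gaussQ (w * x) ∂μ) - ∫ x, binEnt (gaussQ (w * x)) ∂μ

/-- The Wyner secrecy rate `R_s(μ) = I(μ, w₁) - I(μ, w₂)`. -/
noncomputable def wynerRs (w₁ w₂ : ℝ) (μ : Measure ℝ) : ℝ := miMeas μ w₁ - miMeas μ w₂

open ProbabilityTheory

local notation "φ" => gaussianPDFReal 0 1

lemma continuous_gaussianPDFReal (m : ℝ) (v : NNReal) : Continuous (gaussianPDFReal m v) := by
  rw [gaussianPDFReal_def]
  fun_prop

lemma gaussianPDFReal_zero_neg (v : NNReal) (x : ℝ) :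
    gaussianPDFReal 0 v (-x) = gaussianPDFReal 0 v x := by
  simp [gaussianPDFReal]

lemma abs_mul_gaussianPDFReal_le (x : ℝ) : |x| * φ x ≤ (√(2 * π))⁻¹ := by
  have hx : |x| * exp (-x ^ 2 / 2) ≤ 1 := by
    rw [← le_div_iff₀ (exp_pos _), one_div, ← exp_neg, neg_div, neg_neg]
    nlinarith [add_one_le_exp (x ^ 2 / 2), sq_abs x, sq_nonneg (|x| - 1)]
  calc |x| * φ x = (√(2 * π))⁻¹ * (|x| * exp (-x ^ 2 / 2)) := by
        simp [gaussianPDFReal]; ring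
    _ ≤ (√(2 * π))⁻¹ := mul_le_of_le_one_right (by positivity) hx

lemma gaussQ_eq_setIntegral (x : ℝ) : gaussQ x = ∫ u in Set.Ioi x, φ u := by
  simp [gaussQ, gaussianPDFReal]

lemma gaussQ_eq_one_sub (x : ℝ) : gaussQ x = 1 - ∫ u in Set.Iic x, φ u := by
  rw [gaussQ_eq_setIntegral, eq_sub_iff_add_eq, add_comm,
    intervalIntegral.integral_Iic_add_Ioi (integrable_gaussianPDFReal 0 1).integrableOn
      (integrable_gaussianPDFReal 0 1).integrableOn,
    integral_gaussianPDFReal_eq_one 0 one_ne_zero]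

lemma gaussQ_neg (x : ℝ) : gaussQ (-x) = 1 - gaussQ x := by
  rw [gaussQ_eq_one_sub x, gaussQ_eq_setIntegral, sub_sub_cancel, ← neg_neg x,
    ← integral_comp_neg_Ioi, neg_neg]
  simp only [gaussianPDFReal_zero_neg]

lemma gaussQ_sub_gaussQ (a b : ℝ) : gaussQ a - gaussQ b = ∫ u in a..b, φ u := by
  rw [gaussQ_eq_one_sub, gaussQ_eq_one_sub, ← intervalIntegral.integral_Iic_sub_Iic
    (integrable_gaussianPDFReal 0 1).integrableOn (integrable_gaussianPDFReal 0 1).integrableOn]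
  ring

lemma hasDerivAt_gaussQ (x : ℝ) : HasDerivAt gaussQ (-φ x) x := by
  have hQ : gaussQ = fun y => gaussQ 0 - ∫ u in (0 : ℝ)..y, φ u := by
    ext y; rw [← gaussQ_sub_gaussQ]; ring
  rw [hQ]
  exact (intervalIntegral.integral_hasDerivAt_right
    (integrable_gaussianPDFReal 0 1).intervalIntegrable
    (continuous_gaussianPDFReal 0 1).aestronglyMeasurable.stronglyMeasurableAtFilter
    (continuous_gaussianPDFReal 0 1).continuousAt).const_sub _

@[fun_prop]
lemma continuous_gaussQ : Continuous gaussQ :=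
  continuous_iff_continuousAt.2 fun x => (hasDerivAt_gaussQ x).continuousAt

lemma strictAnti_gaussQ : StrictAnti gaussQ :=
  strictAnti_of_hasDerivAt_neg hasDerivAt_gaussQ
    fun x => neg_neg_of_pos (gaussianPDFReal_pos 0 1 x one_ne_zero)

lemma gaussQ_pos (x : ℝ) : 0 < gaussQ x := by
  have h : 0 ≤ gaussQ (x + 1) := by
    rw [gaussQ_eq_setIntegral]
    exact setIntegral_nonneg measurableSet_Ioi fun u _ => gaussianPDFReal_nonneg 0 1 u
  exact h.trans_lt (strictAnti_gaussQ (lt_add_one x))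

lemma gaussQ_lt_one (x : ℝ) : gaussQ x < 1 := by
  linarith [gaussQ_neg x, gaussQ_pos (-x)]

lemma integrable_gaussQ_comp {α : Type*} [MeasurableSpace α] (ν : Measure α)
    [IsFiniteMeasure ν] {f : α → ℝ} (hf : Measurable f) : Integrable (fun x => gaussQ (f x)) ν := by
  refine Integrable.of_bound (C := 1) (continuous_gaussQ.measurable.comp hf).aestronglyMeasurable
    (Eventually.of_forall fun x => ?_)
  rw [norm_of_nonneg (gaussQ_pos _).le]
  exact (gaussQ_lt_one _).le

noncomputable def meanGaussQ (ν : Measure ℝ) (w : ℝ) : ℝ := ∫ x, gaussQ (w * x) ∂ν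

section meanGaussQ

variable (ν : Measure ℝ)

lemma meanGaussQ_neg [IsProbabilityMeasure ν] (w : ℝ) :
    meanGaussQ ν (-w) = 1 - meanGaussQ ν w := by
  simp only [meanGaussQ, neg_mul, gaussQ_neg]
  rw [integral_sub (integrable_const 1) (integrable_gaussQ_comp ν (measurable_const_mul w)),
    integral_const, probReal_univ, one_smul]

lemma meanGaussQ_pos [IsProbabilityMeasure ν] (w : ℝ) : 0 < meanGaussQ ν w := by
  rw [meanGaussQ, integral_pos_iff_support_of_nonneg (fun x => (gaussQ_pos _).le)
    (integrable_gaussQ_comp ν (measurable_const_mul w)),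
    Function.support_eq_univ fun x => (gaussQ_pos _).ne', measure_univ]
  exact one_pos

lemma meanGaussQ_lt_one [IsProbabilityMeasure ν] (w : ℝ) : meanGaussQ ν w < 1 := by
  linarith [meanGaussQ_neg ν w, meanGaussQ_pos ν (-w)]

lemma continuous_meanGaussQ [IsFiniteMeasure ν] : Continuous (meanGaussQ ν) :=
  continuous_of_dominated
    (fun w => (integrable_gaussQ_comp ν (measurable_const_mul w)).aestronglyMeasurable)
    (fun w => Eventually.of_forall fun x => by
      rw [norm_of_nonneg (gaussQ_pos _).le]; exact (gaussQ_lt_one _).le)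
    (integrable_const 1)
    (Eventually.of_forall fun x => continuous_gaussQ.comp (continuous_mul_const x))

/-- Near `w ≠ 0` the derivative is dominated by a constant, as
`|φ(w' x) x| ≤ (√(2π))⁻¹ / |w'|`. -/
lemma hasDerivAt_meanGaussQ [IsFiniteMeasure ν] {w : ℝ} (hw : w ≠ 0) :
    HasDerivAt (meanGaussQ ν) (-∫ x, φ (w * x) * x ∂ν) w := by
  have hw' : 0 < |w| / 2 := by positivity
  have hbound : ∀ x, ∀ w' ∈ Metric.ball w (|w| / 2),
      ‖-φ (w' * x) * x‖ ≤ 2 * (√(2 * π))⁻¹ / |w| := by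
    intro x w' hw''
    have hlow : |w| / 2 ≤ |w'| := by
      have := abs_sub_abs_le_abs_sub w w'
      rw [Metric.mem_ball, dist_comm, Real.dist_eq] at hw''
      linarith
    have h := abs_mul_gaussianPDFReal_le (w' * x)
    rw [abs_mul, mul_assoc] at h
    rw [Real.norm_eq_abs, abs_mul, abs_neg, abs_of_nonneg (gaussianPDFReal_nonneg 0 1 _),
      le_div_iff₀ (abs_pos.2 hw)]
    nlinarith [mul_le_mul_of_nonneg_left hlow
      (mul_nonneg (abs_nonneg x) (gaussianPDFReal_nonneg 0 1 (w' * x)))]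
  have h := (hasDerivAt_integral_of_dominated_loc_of_deriv_le (Metric.ball_mem_nhds w hw')
    (Eventually.of_forall fun w' =>
      (integrable_gaussQ_comp ν (measurable_const_mul w')).aestronglyMeasurable)
    (integrable_gaussQ_comp ν (measurable_const_mul w))
    (by fun_prop) (Eventually.of_forall (hbound ·)) (integrable_const _)
    (Eventually.of_forall fun x w' _ =>
      by exact (hasDerivAt_gaussQ (w' * x)).comp w' (hasDerivAt_mul_const x))).2
  simp only [neg_mul, integral_neg] at h
  exact h

end meanGaussQ

lemma binEnt_eq_binEntropy : binEnt = binEntropy := by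
  ext p
  simp only [binEnt, eta, binEntropy, log_inv]
  ring

lemma binEntropy_gaussQ_neg (x : ℝ) : binEntropy (gaussQ (-x)) = binEntropy (gaussQ x) := by
  rw [gaussQ_neg, binEntropy_one_sub]

lemma binEntropy_gaussQ_mul_abs (w x : ℝ) :
    binEntropy (gaussQ (w * |x|)) = binEntropy (gaussQ (w * x)) := by
  rcases abs_choice x with h | h <;> simp only [h, mul_neg, binEntropy_gaussQ_neg]

lemma gaussianPDFReal_mul_abs (w x : ℝ) : φ (w * |x|) = φ (w * x) := by
  rcases abs_choice x with h | h <;> simp only [h, mul_neg, gaussianPDFReal_zero_neg]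

lemma abs_log_one_sub_sub_log_le {p q : ℝ} (hq : 0 < q) (hqp : q ≤ p) (hqp' : q ≤ 1 - p) :
    |log (1 - p) - log p| ≤ log (1 - q) - log q := by
  have h₁ := log_le_log hq hqp
  have h₂ := log_le_log hq hqp'
  have h₃ := log_le_log (hq.trans_le hqp) (show p ≤ 1 - q by linarith)
  have h₄ := log_le_log (hq.trans_le hqp') (show 1 - p ≤ 1 - q by linarith)
  rw [abs_le]
  constructor <;> linarith

lemma miMeas_eq (μ : Measure ℝ) (w : ℝ) :
    miMeas μ w = binEntropy (meanGaussQ μ w) - ∫ x, binEntropy (gaussQ (w * x)) ∂μ := by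
  rw [miMeas, binEnt_eq_binEntropy, meanGaussQ]

lemma miMeas_neg (μ : Measure ℝ) [IsProbabilityMeasure μ] (w : ℝ) :
    miMeas μ (-w) = miMeas μ w := by
  rw [miMeas_eq, miMeas_eq, meanGaussQ_neg, binEntropy_one_sub]
  simp only [neg_mul, binEntropy_gaussQ_neg]

lemma miMeas_abs (μ : Measure ℝ) [IsProbabilityMeasure μ] (w : ℝ) :
    miMeas μ |w| = miMeas μ w := by
  rcases abs_choice w with h | h
  · rw [h]
  · rw [h, miMeas_neg]

section Folding

variable (μ : Measure ℝ)

lemma meanGaussQ_map_abs (w : ℝ) :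
    meanGaussQ (μ.map (fun x : ℝ => |x|)) w = ∫ x, gaussQ (w * |x|) ∂μ :=
  integral_map measurable_abs.aemeasurable (by fun_prop)

lemma meanGaussQ_map_abs_le [IsFiniteMeasure μ] {c w : ℝ} (h : |c| ≤ w) :
    meanGaussQ (μ.map (fun x : ℝ => |x|)) w ≤ meanGaussQ μ c := by
  rw [meanGaussQ_map_abs]
  refine integral_mono (integrable_gaussQ_comp μ (by fun_prop))
    (integrable_gaussQ_comp μ (measurable_const_mul c)) fun x => strictAnti_gaussQ.antitone ?_
  calc c * x ≤ |c| * |x| := abs_mul c x ▸ le_abs_self _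
    _ ≤ w * |x| := mul_le_mul_of_nonneg_right h (abs_nonneg x)

lemma abs_integral_gaussianPDFReal_mul_le (w : ℝ) :
    |∫ x, φ (w * x) * x ∂μ| ≤ ∫ x, φ (w * x) * x ∂(μ.map (fun x : ℝ => |x|)) := by
  rw [integral_map measurable_abs.aemeasurable (by fun_prop)]
  refine abs_integral_le_integral_abs.trans_eq
    (integral_congr_ae (Eventually.of_forall fun x => ?_))
  simp only [abs_mul, abs_of_nonneg (gaussianPDFReal_nonneg 0 1 _), gaussianPDFReal_mul_abs]

lemma miMeas_map_abs_sub (w : ℝ) :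
    miMeas (μ.map (fun x : ℝ => |x|)) w - miMeas μ w =
      binEntropy (meanGaussQ (μ.map (fun x : ℝ => |x|)) w) - binEntropy (meanGaussQ μ w) := by
  rw [miMeas_eq, miMeas_eq, integral_map measurable_abs.aemeasurable (by fun_prop)]
  simp only [binEntropy_gaussQ_mul_abs]
  ring

end Folding

lemma hasDerivAt_binEntropy_meanGaussQ (ν : Measure ℝ) [IsProbabilityMeasure ν] {w : ℝ}
    (hw : w ≠ 0) :
    HasDerivAt (fun w => binEntropy (meanGaussQ ν w))
      ((log (1 - meanGaussQ ν w) - log (meanGaussQ ν w)) * -∫ x, φ (w * x) * x ∂ν) w :=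
  (hasDerivAt_binEntropy (meanGaussQ_pos ν w).ne' (meanGaussQ_lt_one ν w).ne).comp w
    (hasDerivAt_meanGaussQ ν hw)

lemma antitoneOn_miMeas_map_abs_sub (μ : Measure ℝ) [IsProbabilityMeasure μ] :
    AntitoneOn (fun w => miMeas (μ.map (fun x : ℝ => |x|)) w - miMeas μ w) (Set.Ici 0) := by
  simp only [miMeas_map_abs_sub]
  set ν := μ.map (fun x : ℝ => |x|)
  have : IsProbabilityMeasure ν := Measure.isProbabilityMeasure_map measurable_abs.aemeasurable
  have hderiv {w : ℝ} (hw : w ≠ 0) := (hasDerivAt_binEntropy_meanGaussQ ν hw).fun_sub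
    (hasDerivAt_binEntropy_meanGaussQ μ hw)
  refine antitoneOn_of_deriv_nonpos (convex_Ici 0)
    ((binEntropy_continuous.comp (continuous_meanGaussQ ν)).sub
      (binEntropy_continuous.comp (continuous_meanGaussQ μ))).continuousOn
    (fun w hw => ?_) fun w hw => ?_
  all_goals rw [interior_Ici] at hw
  · exact (hderiv hw.ne').differentiableAt.differentiableWithinAt
  rw [(hderiv hw.ne').deriv]
  have hq := meanGaussQ_pos ν w
  have hqp : meanGaussQ ν w ≤ meanGaussQ μ w := meanGaussQ_map_abs_le μ (abs_of_pos hw).le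
  have hqp' : meanGaussQ ν w ≤ 1 - meanGaussQ μ w := by
    rw [← meanGaussQ_neg]
    exact meanGaussQ_map_abs_le μ (by rw [abs_neg, abs_of_pos hw])
  set a := log (1 - meanGaussQ ν w) - log (meanGaussQ ν w)
  set b := log (1 - meanGaussQ μ w) - log (meanGaussQ μ w)
  set A := ∫ x, φ (w * x) * x ∂ν
  set B := ∫ x, φ (w * x) * x ∂μ
  have hlog : |b| ≤ a := abs_log_one_sub_sub_log_le hq hqp hqp'
  have hint : |B| ≤ A := abs_integral_gaussianPDFReal_mul_le μ w
  calc a * -A - b * -B = b * B - a * A := by ring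
    _ ≤ |b| * |B| - a * A := by rw [← abs_mul]; gcongr; exact le_abs_self _
    _ ≤ 0 := sub_nonpos.2 (mul_le_mul hlog hint (abs_nonneg _) ((abs_nonneg _).trans hlog))

theorem folded_rate_le_general (w₁ w₂ : ℝ)
    (hgt : |w₂| < |w₁|) (μ : Measure ℝ) [IsProbabilityMeasure μ] :
    wynerRs w₁ w₂ (μ.map (fun x : ℝ => |x|)) ≤ wynerRs w₁ w₂ μ := by
  have : IsProbabilityMeasure (μ.map (fun x : ℝ => |x|)) :=
    Measure.isProbabilityMeasure_map measurable_abs.aemeasurable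
  have h := antitoneOn_miMeas_map_abs_sub μ (abs_nonneg w₂) (abs_nonneg w₁) hgt.le
  simp only [miMeas_abs] at h
  unfold wynerRs
  linarith

/-- Lemma 2, second inequality: if `|w₁| > |w₂|`, folding the input distribution
(replacing `μ` by the law of `|X|`) does not increase the Wyner secrecy rate. -/
theorem folded_rate_le (w₁ w₂ : ℝ) (hw₁ : w₁ ≠ 0) (hw₂ : w₂ ≠ 0)
    (hgt : |w₂| < |w₁|) (μ : Measure ℝ) [IsProbabilityMeasure μ]
    (hint : Integrable (fun x : ℝ => x ^ 2) μ) :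
    wynerRs w₁ w₂ (μ.map (fun x : ℝ => |x|)) ≤ wynerRs w₁ w₂ μ :=
  folded_rate_le_general w₁ w₂ hgt μ
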